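/- As p → ∞, (1+p)·K_p → e^{-1}, where K_p = sup_{x∈[0,1]} (x(1-x)^p + (1-x)x^p). -/

import Mathlib

/-!
By weighted AM–GM, `x (1 - x)^p` is maximal at `x = 1/(p+1)`, with value
`M_p = (1/(p+1)) (p/(p+1))^p`. Since `κ_p` is symmetric under `x ↦ 1 - x`, on `[0, 1/2]`
its first term is at most `M_p` and its second at most `2^{-p}`, so `M_p ≤ K_p ≤ M_p + 2^{-p}`.
Multiplying by `1 + p`, the lower bound tends to `e⁻¹` and the error term `(1 + p) 2^{-p}` to `0`.
-/

noncomputable def kappa (p x : ℝ) : ℝ := x * (1 - x) ^ p + (1 - x) * x ^ p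

noncomputable def Kmax (p : ℝ) : ℝ := sSup (kappa p '' Set.Icc (0:ℝ) 1)

open Real Filter Set Topology

/-- Weighted AM–GM with weights `1/(p+1)` and `p/(p+1)`, raised to the power `p + 1`. -/
lemma mul_rpow_le_add_mul_div_rpow {a b p : ℝ} (ha : 0 ≤ a) (hb : 0 ≤ b) (hp : 0 ≤ p) :
    a * b ^ p ≤ ((a + p * b) / (p + 1)) ^ (p + 1) := by
  have hp1 : 0 < p + 1 := by linarith
  have amgm : a ^ (1 / (p + 1)) * b ^ (p / (p + 1)) ≤ (a + p * b) / (p + 1) := by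
    convert geom_mean_le_arith_mean2_weighted (by positivity) (by positivity) ha hb
      (by field_simp; ring : 1 / (p + 1) + p / (p + 1) = 1) using 1
    field_simp
  calc a * b ^ p
      = (a ^ (1 / (p + 1)) * b ^ (p / (p + 1))) ^ (p + 1) := by
        rw [mul_rpow (by positivity) (by positivity), ← rpow_mul ha, ← rpow_mul hb,
          div_mul_cancel₀ _ hp1.ne', div_mul_cancel₀ _ hp1.ne', rpow_one]
    _ ≤ ((a + p * b) / (p + 1)) ^ (p + 1) := rpow_le_rpow (by positivity) amgm hp1.le

lemma mul_one_sub_rpow_le {p x : ℝ} (hp : 0 < p) (hx₀ : 0 ≤ x) (hx₁ : x ≤ 1) :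
    x * (1 - x) ^ p ≤ (p + 1)⁻¹ * (p / (p + 1)) ^ p := by
  have hp1 : 0 < p + 1 := by linarith
  have key := mul_rpow_le_add_mul_div_rpow hx₀ (div_nonneg (sub_nonneg.2 hx₁) hp.le) hp.le
  rw [mul_div_cancel₀ _ hp.ne', add_sub_cancel, div_rpow (sub_nonneg.2 hx₁) hp.le,
    rpow_add_one (by positivity), ← mul_div_assoc, div_le_iff₀ (by positivity)] at key
  calc x * (1 - x) ^ p
      ≤ (1 / (p + 1)) ^ p * (1 / (p + 1)) * p ^ p := key
    _ = (p + 1)⁻¹ * (p / (p + 1)) ^ p := by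
        rw [div_eq_mul_one_div p, mul_rpow hp.le (by positivity)]
        ring

lemma kappa_one_sub (p x : ℝ) : kappa p (1 - x) = kappa p x := by
  simp only [kappa, sub_sub_cancel]
  ring

lemma kappa_le {p x : ℝ} (hp : 0 < p) (hx : x ∈ Icc (0 : ℝ) 1) :
    kappa p x ≤ (p + 1)⁻¹ * (p / (p + 1)) ^ p + (1 / 2) ^ p := by
  wlog hx_half : x ≤ 1 / 2 generalizing x
  · rw [← kappa_one_sub]
    exact this ⟨by linarith [hx.2], by linarith [hx.1]⟩ (by linarith)
  have main := mul_one_sub_rpow_le hp hx.1 hx.2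
  have tail : (1 - x) * x ^ p ≤ (1 / 2) ^ p :=
    calc (1 - x) * x ^ p ≤ x ^ p :=
          mul_le_of_le_one_left (rpow_nonneg hx.1 _) (by linarith [hx.1])
      _ ≤ (1 / 2) ^ p := rpow_le_rpow hx.1 hx_half hp.le
  exact add_le_add main tail

lemma le_kappa_inv_add_one {p : ℝ} (hp : 0 ≤ p) :
    (p + 1)⁻¹ * (p / (p + 1)) ^ p ≤ kappa p (p + 1)⁻¹ := by
  have hp1 : 0 < p + 1 := by linarith
  have : 1 - (p + 1)⁻¹ = p / (p + 1) := by field_simp; ring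
  rw [kappa, this]
  exact le_add_of_nonneg_right (by positivity)

lemma bddAbove_kappa_image {p : ℝ} (hp : 0 < p) : BddAbove (kappa p '' Icc 0 1) :=
  ⟨_, forall_mem_image.2 fun _ hx => kappa_le hp hx⟩

lemma Kmax_le {p : ℝ} (hp : 0 < p) :
    Kmax p ≤ (p + 1)⁻¹ * (p / (p + 1)) ^ p + (1 / 2) ^ p :=
  csSup_le ((nonempty_Icc.2 zero_le_one).image _) (forall_mem_image.2 fun _ hx => kappa_le hp hx)

lemma le_Kmax {p : ℝ} (hp : 0 < p) : (p + 1)⁻¹ * (p / (p + 1)) ^ p ≤ Kmax p := by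
  have hmem : (p + 1)⁻¹ ∈ Icc (0 : ℝ) 1 :=
    ⟨by positivity, inv_le_one_of_one_le₀ (by linarith)⟩
  exact (le_kappa_inv_add_one hp.le).trans (le_csSup (bddAbove_kappa_image hp) ⟨_, hmem, rfl⟩)

lemma tendsto_div_add_one_rpow_self :
    Tendsto (fun p : ℝ => (p / (p + 1)) ^ p) atTop (𝓝 (exp (-1))) := by
  have h := (tendsto_one_add_div_rpow_exp 1).inv₀ (exp_ne_zero 1)
  rw [← exp_neg] at h
  refine h.congr' ?_
  filter_upwards [eventually_gt_atTop (0 : ℝ)] with p hp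
  rw [← inv_rpow (by positivity), one_add_div hp.ne', inv_div]

lemma tendsto_one_add_mul_half_rpow :
    Tendsto (fun p : ℝ => (1 + p) * (1 / 2 : ℝ) ^ p) atTop (𝓝 0) := by
  have hlog : 0 < log 2 := log_pos one_lt_two
  have h := (tendsto_rpow_mul_exp_neg_mul_atTop_nhds_zero 0 _ hlog).add
    (tendsto_rpow_mul_exp_neg_mul_atTop_nhds_zero 1 _ hlog)
  rw [add_zero] at h
  refine h.congr fun p => ?_
  rw [rpow_def_of_pos one_half_pos, one_div, log_inv, rpow_zero, rpow_one]
  ring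

/-- `(1+p)·K_p → e⁻¹` as `p → ∞`. -/
theorem Kmax_asymptotic :
    Filter.Tendsto (fun p : ℝ => (1 + p) * Kmax p) Filter.atTop
      (nhds (Real.exp (-1))) := by
  have upper := tendsto_div_add_one_rpow_self.add tendsto_one_add_mul_half_rpow
  rw [add_zero] at upper
  have scale {p : ℝ} (hp : 0 < p) (y : ℝ) : (1 + p) * ((p + 1)⁻¹ * y) = y := by
    rw [add_comm, mul_inv_cancel_left₀ (by positivity)]
  refine tendsto_of_tendsto_of_tendsto_of_le_of_le' tendsto_div_add_one_rpow_self upper ?_ ?_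
  · filter_upwards [eventually_gt_atTop (0 : ℝ)] with p hp
    calc (p / (p + 1)) ^ p = (1 + p) * ((p + 1)⁻¹ * (p / (p + 1)) ^ p) := (scale hp _).symm
      _ ≤ (1 + p) * Kmax p := by gcongr; exact le_Kmax hp
  · filter_upwards [eventually_gt_atTop (0 : ℝ)] with p hp
    calc (1 + p) * Kmax p
        ≤ (1 + p) * ((p + 1)⁻¹ * (p / (p + 1)) ^ p + (1 / 2) ^ p) := by
          gcongr; exact Kmax_le hp
      _ = (p / (p + 1)) ^ p + (1 + p) * (1 / 2) ^ p := by rw [mul_add, scale hp]
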